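/- Let the Bermudan put recursion be defined by V_M(S) = max{0, K - S}, Ṽ_{m-1}(S) = e^{-2r_mτ_m/σ_m²} ∫_0^∞ V_m(Sz) ρ_m(z,1) dz, and V_{m-1}(S) = max{Ṽ_{m-1}(S), K - S}. If q_m ≥ 0 for all m, then for every 1 ≤ m ≤ M-1 and all 0 < S_1 < S_2: 0 < Ṽ_m(S_1) - Ṽ_m(S_2) < S_2 - S_1. In particular Ṽ_m is strictly decreasing and S ↦ Ṽ_m(S) + S is strictly increasing. -/

import Mathlib

open MeasureTheory

/-- `τ_m = σ_m² (t_m - t_{m-1}) / 2`. -/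
noncomputable def tauBS (σ t : ℕ → ℝ) (m : ℕ) : ℝ := (σ m)^2 * (t m - t (m - 1)) / 2

/-- The lognormal density `ρ_m(z,1)` of the Black–Scholes model. -/
noncomputable def rho1BS (r q σ t : ℕ → ℝ) (m : ℕ) (z : ℝ) : ℝ :=
  1 / (2 * Real.sqrt (Real.pi * tauBS σ t m) * z) *
    Real.exp (-(Real.log z -
      (2 / (σ m)^2) * (r m - q m - (σ m)^2 / 2) * tauBS σ t m)^2 / (4 * tauBS σ t m))


/-!
Write `Ṽ(S) = D ∫ W(Sz) ρ(z) dz`, where `W` is the value at the next date, `D` the discount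
factor and `ρ` a lognormal density. Going backwards from the payoff, every value function `W`
is nonnegative and nonincreasing with `W(S) + S` nondecreasing, strictly decreasing below `K`,
and with `W(S) + S` strictly increasing above `K`. Averaging against the positive kernel `ρ`
makes `Ṽ` and `S ↦ ∫ W(Sz) ρ(z) dz + S ∫ z ρ(z) dz` strictly monotone on all of `(0, ∞)`; since
`D ∫ z ρ(z) dz = exp(-2 q τ / σ²) ≤ 1` when `q ≥ 0`, also `Ṽ(S) + S` is strictly increasing.
Taking the maximum with the exercise value `K - S` restores the properties of `W` one date
earlier.
-/

open Set Real ProbabilityTheory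
open scoped NNReal ENNReal

theorem integral_Ioi_zero_eq_integral_exp_mul (g : ℝ → ℝ) :
    ∫ z in Ioi (0 : ℝ), g z = ∫ x, exp x * g (exp x) := by
  have h := integral_image_eq_integral_abs_deriv_smul MeasurableSet.univ
    (fun x _ => (hasDerivAt_exp x).hasDerivWithinAt) exp_injective.injOn g
  rw [image_univ, range_exp] at h
  simp [h, abs_of_pos (exp_pos _)]

theorem integrableOn_Ioi_zero_iff_integrable_exp_mul (g : ℝ → ℝ) :
    IntegrableOn g (Ioi 0) ↔ Integrable (fun x => exp x * g (exp x)) := by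
  have h := integrableOn_image_iff_integrableOn_abs_deriv_smul MeasurableSet.univ
    (fun x _ => (hasDerivAt_exp x).hasDerivWithinAt) exp_injective.injOn g
  rw [image_univ, range_exp] at h
  simp [h, abs_of_pos (exp_pos _)]

/-- Completing the square: tilting a Gaussian density by `exp` shifts its mean by the variance. -/
theorem exp_mul_gaussianPDFReal {v : ℝ≥0} (hv : v ≠ 0) (μ x : ℝ) :
    exp x * gaussianPDFReal μ v x = exp (μ + v / 2) * gaussianPDFReal (μ + v) v x := by
  simp only [gaussianPDFReal, mul_left_comm (exp _), ← exp_add]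
  have : (v : ℝ) ≠ 0 := by exact_mod_cast hv
  congr 2
  field_simp
  ring

/-- The density of `exp X` for `X` Gaussian with mean `μ` and variance `v`. -/
noncomputable def lognormalPDFReal (μ : ℝ) (v : ℝ≥0) (z : ℝ) : ℝ :=
  gaussianPDFReal μ v (log z) / z

namespace lognormalPDFReal

variable {μ : ℝ} {v : ℝ≥0}

theorem pos (hv : v ≠ 0) {z : ℝ} (hz : 0 < z) : 0 < lognormalPDFReal μ v z :=
  div_pos (gaussianPDFReal_pos μ v _ hv) hz

theorem exp_mul_apply_exp (x : ℝ) :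
    exp x * lognormalPDFReal μ v (exp x) = gaussianPDFReal μ v x := by
  rw [lognormalPDFReal, log_exp, mul_div_cancel₀ _ (exp_ne_zero x)]

theorem integrableOn : IntegrableOn (lognormalPDFReal μ v) (Ioi 0) := by
  simpa [integrableOn_Ioi_zero_iff_integrable_exp_mul, exp_mul_apply_exp]
    using integrable_gaussianPDFReal μ v

theorem exp_mul_mul_apply_exp (hv : v ≠ 0) (x : ℝ) :
    exp x * (exp x * lognormalPDFReal μ v (exp x)) =
      exp (μ + v / 2) * gaussianPDFReal (μ + v) v x := by
  rw [exp_mul_apply_exp, exp_mul_gaussianPDFReal hv]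

theorem integrableOn_id_mul (hv : v ≠ 0) :
    IntegrableOn (fun z => z * lognormalPDFReal μ v z) (Ioi 0) := by
  simpa [integrableOn_Ioi_zero_iff_integrable_exp_mul, exp_mul_mul_apply_exp hv]
    using (integrable_gaussianPDFReal (μ + v) v).const_mul (exp (μ + v / 2))

theorem integral_id_mul (hv : v ≠ 0) :
    ∫ z in Ioi 0, z * lognormalPDFReal μ v z = exp (μ + v / 2) := by
  simp [integral_Ioi_zero_eq_integral_exp_mul, exp_mul_mul_apply_exp hv, integral_const_mul,
    integral_gaussianPDFReal_eq_one _ hv]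

end lognormalPDFReal

theorem rho1BS_eq_lognormalPDFReal {r q σ t : ℕ → ℝ} {m : ℕ} (hτ : 0 < tauBS σ t m) :
    rho1BS r q σ t m = lognormalPDFReal ((2 / σ m ^ 2) * (r m - q m - σ m ^ 2 / 2) * tauBS σ t m)
      (2 * tauBS σ t m).toNNReal := by
  ext z
  have hsqrt : √(2 * π * (2 * tauBS σ t m)) = 2 * √(π * tauBS σ t m) := by
    rw [show 2 * π * (2 * tauBS σ t m) = 2 ^ 2 * (π * tauBS σ t m) by ring,
      sqrt_mul (by norm_num), sqrt_sq (by norm_num)]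
  simp only [rho1BS, lognormalPDFReal, gaussianPDFReal, hsqrt,
    coe_toNNReal _ (by positivity : 0 ≤ 2 * tauBS σ t m)]
  field_simp
  ring_nf

theorem setIntegral_pos_of_pos_on_Ioo {f : ℝ → ℝ} {s : Set ℝ} {a b : ℝ} (hs : MeasurableSet s)
    (hf : IntegrableOn f s) (hf0 : ∀ x ∈ s, 0 ≤ f x) (hab : a < b) (hsub : Ioo a b ⊆ s)
    (hpos : ∀ x ∈ Ioo a b, 0 < f x) : 0 < ∫ x in s, f x := by
  rw [setIntegral_pos_iff_support_of_nonneg_ae (ae_restrict_of_forall_mem hs hf0) hf]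
  calc (0 : ℝ≥0∞) < volume (Ioo a b) := by simpa using hab
    _ ≤ volume (Function.support f ∩ s) :=
      measure_mono fun x hx => ⟨(hpos x hx).ne', hsub hx⟩

theorem MonotoneOn.lt_of_strictMonoOn_Ioo {f : ℝ → ℝ} {a b x y : ℝ}
    (hf : MonotoneOn f (Ioi 0)) (hfab : StrictMonoOn f (Ioo a b)) (ha : 0 ≤ a)
    (hx : x ∈ Ioo a b) (hxy : x < y) : f x < f y := by
  obtain ⟨c, hxc, hc⟩ := exists_between (lt_min hxy hx.2)
  have hcy : c ≤ y := hc.le.trans (min_le_left _ _)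
  have hc₀ : 0 < c := ha.trans_lt (hx.1.trans hxc)
  calc f x < f c := hfab hx ⟨hx.1.trans hxc, hc.trans_le (min_le_right _ _)⟩ hxc
    _ ≤ f y := hf hc₀ (hc₀.trans_le hcy) hcy

theorem strictMonoOn_integral_comp_mul_mul {f ρ : ℝ → ℝ} {a b : ℝ}
    (hρ : ∀ z, 0 < z → 0 < ρ z) (hf : MonotoneOn f (Ioi 0)) (hfab : StrictMonoOn f (Ioo a b))
    (ha : 0 ≤ a) (hab : a < b)
    (hint : ∀ S, 0 < S → IntegrableOn (fun z => f (S * z) * ρ z) (Ioi 0)) :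
    StrictMonoOn (fun S => ∫ z in Ioi 0, f (S * z) * ρ z) (Ioi 0) := by
  intro S₁ hS₁ S₂ hS₂ hS
  have hS₁ : 0 < S₁ := hS₁
  have hS₂ : 0 < S₂ := hS₂
  rw [← sub_pos, ← integral_sub (hint S₂ hS₂) (hint S₁ hS₁)]
  refine setIntegral_pos_of_pos_on_Ioo measurableSet_Ioi ((hint S₂ hS₂).sub (hint S₁ hS₁))
    (fun z hz => ?_) (div_lt_div_of_pos_right hab hS₁) ?_ (fun z hz => ?_)
  · have hz : 0 < z := hz
    exact sub_nonneg.2 (mul_le_mul_of_nonneg_right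
      (hf (mul_pos hS₁ hz) (mul_pos hS₂ hz) (by gcongr)) (hρ z hz).le)
  · exact fun z hz => (div_nonneg ha hS₁.le).trans_lt hz.1
  · have hz₀ : 0 < z := (div_nonneg ha hS₁.le).trans_lt hz.1
    have hS₁z : S₁ * z ∈ Ioo a b :=
      ⟨(div_lt_iff₀' hS₁).1 hz.1, (lt_div_iff₀' hS₁).1 hz.2⟩
    exact sub_pos.2 (mul_lt_mul_of_pos_right
      (hf.lt_of_strictMonoOn_Ioo hfab ha hS₁z (by gcongr)) (hρ z hz₀))

/-- The properties of the payoff `S ↦ max 0 (K - S)` on `(0, ∞)` that the backward recursion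
preserves. -/
structure IsPutShaped (K : ℝ) (W : ℝ → ℝ) : Prop where
  nonneg : ∀ S, 0 < S → 0 ≤ W S
  antitoneOn : AntitoneOn W (Ioi 0)
  monotoneOn_add : MonotoneOn (fun S => W S + S) (Ioi 0)
  strictAntiOn : StrictAntiOn W (Ioo 0 K)
  strictMonoOn_add : StrictMonoOn (fun S => W S + S) (Ioi K)

structure IsContinuationShaped (c : ℝ → ℝ) : Prop where
  nonneg : ∀ S, 0 < S → 0 ≤ c S
  strictAntiOn : StrictAntiOn c (Ioi 0)
  strictMonoOn_add : StrictMonoOn (fun S => c S + S) (Ioi 0)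

theorem isPutShaped_payoff (K : ℝ) : IsPutShaped K (fun S => max 0 (K - S)) where
  nonneg _ _ := le_max_left _ _
  antitoneOn _ _ _ _ hab := max_le_max le_rfl (by linarith)
  monotoneOn_add _ _ _ _ hab := by
    simp only [← max_add_add_right, zero_add, sub_add_cancel]
    exact max_le_max hab le_rfl
  strictAntiOn a ha b hb hab := by
    simp only [max_eq_right (sub_nonneg.2 ha.2.le), max_eq_right (sub_nonneg.2 hb.2.le)]
    linarith
  strictMonoOn_add a ha b hb hab := by
    simp only [max_eq_left (sub_nonpos.2 (mem_Ioi.1 ha).le),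
      max_eq_left (sub_nonpos.2 (mem_Ioi.1 hb).le)]
    linarith

theorem IsContinuationShaped.isPutShaped_max {K : ℝ} {c W : ℝ → ℝ} (hc : IsContinuationShaped c)
    (hK : 0 < K) (hW : ∀ S, 0 < S → W S = max (c S) (K - S)) : IsPutShaped K W where
  nonneg S hS := (hW S hS).symm ▸ (hc.nonneg S hS).trans (le_max_left _ _)
  antitoneOn a ha b hb hab := by
    rw [hW a ha, hW b hb]
    exact max_le_max (hc.strictAntiOn.antitoneOn ha hb hab) (by linarith)
  monotoneOn_add a ha b hb hab := by
    simp only [hW a ha, hW b hb, ← max_add_add_right, sub_add_cancel]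
    exact max_le_max (hc.strictMonoOn_add.monotoneOn ha hb hab) le_rfl
  strictAntiOn a ha b hb hab := by
    rw [hW a ha.1, hW b hb.1]
    exact max_lt_max (hc.strictAntiOn ha.1 hb.1 hab) (by linarith)
  strictMonoOn_add a ha b hb hab := by
    have ha₀ : 0 < a := hK.trans ha
    have hb₀ : 0 < b := hK.trans hb
    have hca : K - a ≤ c a := by linarith [hc.nonneg a ha₀, mem_Ioi.1 ha]
    simp only [hW a ha₀, hW b hb₀, max_eq_left hca]
    exact (hc.strictMonoOn_add ha₀ hb₀ hab).trans_le (add_le_add_left (le_max_left _ _) b)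

namespace IsPutShaped

variable {K : ℝ} {W ρ : ℝ → ℝ}

theorem le_add_one (hW : IsPutShaped K W) {S : ℝ} (hS : 0 < S) : W S ≤ W 1 + 1 := by
  rcases le_total S 1 with h | h
  · linarith [hW.monotoneOn_add hS (mem_Ioi.2 one_pos) h]
  · linarith [hW.antitoneOn (mem_Ioi.2 one_pos) hS h]

theorem integrableOn_comp_mul_mul (hW : IsPutShaped K W) (hρ : IntegrableOn ρ (Ioi 0))
    {S : ℝ} (hS : 0 < S) : IntegrableOn (fun z => W (S * z) * ρ z) (Ioi 0) := by
  have hanti : AntitoneOn (fun z => W (S * z)) (Ioi 0) := fun a ha b hb hab =>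
    hW.antitoneOn (mul_pos hS ha) (mul_pos hS hb) (by gcongr)
  refine hρ.bdd_mul (c := W 1 + 1)
    (aemeasurable_restrict_of_antitoneOn measurableSet_Ioi hanti).aestronglyMeasurable
    (ae_restrict_of_forall_mem measurableSet_Ioi ?_)
  intro z hz
  have hSz : 0 < S * z := mul_pos hS hz
  rw [norm_of_nonneg (hW.nonneg _ hSz)]
  exact hW.le_add_one hSz

variable (hρ : ∀ z, 0 < z → 0 < ρ z) (hρi : IntegrableOn ρ (Ioi 0))
include hρ hρi

theorem strictAntiOn_integral (hW : IsPutShaped K W) (hK : 0 < K) :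
    StrictAntiOn (fun S => ∫ z in Ioi 0, W (S * z) * ρ z) (Ioi 0) := by
  have h := strictMonoOn_integral_comp_mul_mul (f := fun S => -W S) hρ hW.antitoneOn.neg
    hW.strictAntiOn.neg le_rfl hK fun S hS => by
      simpa only [neg_mul] using integrableOn_fun_neg_iff.2 (hW.integrableOn_comp_mul_mul hρi hS)
  intro a ha b hb hab
  simpa only [neg_mul, integral_neg, neg_lt_neg_iff] using h ha hb hab

theorem strictMonoOn_integral_add (hW : IsPutShaped K W) (hK : 0 < K)
    (hzρ : IntegrableOn (fun z => z * ρ z) (Ioi 0)) :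
    StrictMonoOn (fun S => (∫ z in Ioi 0, W (S * z) * ρ z) + S * ∫ z in Ioi 0, z * ρ z)
      (Ioi 0) := by
  have hsplit : ∀ S, 0 < S → (fun z => (W (S * z) + S * z) * ρ z) =
      fun z => W (S * z) * ρ z + S * (z * ρ z) := fun S _ => by ext z; ring
  have h := strictMonoOn_integral_comp_mul_mul (f := fun S => W S + S) hρ hW.monotoneOn_add
    (hW.strictMonoOn_add.mono Ioo_subset_Ioi_self) hK.le (lt_add_one K) fun S hS => by
      rw [hsplit S hS]
      exact (hW.integrableOn_comp_mul_mul hρi hS).add (hzρ.const_mul S)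
  intro a ha b hb hab
  have := h ha hb hab
  simp only [hsplit a ha, hsplit b hb] at this
  rwa [integral_add (hW.integrableOn_comp_mul_mul hρi ha) (hzρ.const_mul a),
    integral_add (hW.integrableOn_comp_mul_mul hρi hb) (hzρ.const_mul b),
    integral_const_mul, integral_const_mul] at this

end IsPutShaped

theorem IsPutShaped.isContinuationShaped {K D : ℝ} {W ρ c : ℝ → ℝ} (hW : IsPutShaped K W)
    (hK : 0 < K) (hρ : ∀ z, 0 < z → 0 < ρ z) (hρi : IntegrableOn ρ (Ioi 0))
    (hzρ : IntegrableOn (fun z => z * ρ z) (Ioi 0)) (hD : 0 < D)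
    (hDρ : D * ∫ z in Ioi 0, z * ρ z ≤ 1)
    (hc : ∀ S, 0 < S → c S = D * ∫ z in Ioi 0, W (S * z) * ρ z) : IsContinuationShaped c where
  nonneg S hS := (hc S hS).symm ▸ mul_nonneg hD.le (setIntegral_nonneg measurableSet_Ioi
    fun z hz => mul_nonneg (hW.nonneg _ (mul_pos hS hz)) (hρ z hz).le)
  strictAntiOn a ha b hb hab := by
    rw [hc a ha, hc b hb]
    exact mul_lt_mul_of_pos_left (hW.strictAntiOn_integral hρ hρi hK ha hb hab) hD
  strictMonoOn_add a ha b hb hab := by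
    have h := hW.strictMonoOn_integral_add hρ hρi hK hzρ ha hb hab
    simp only [hc a ha, hc b hb]
    set E := ∫ z in Ioi 0, z * ρ z
    calc D * (∫ z in Ioi 0, W (a * z) * ρ z) + a
        = D * ((∫ z in Ioi 0, W (a * z) * ρ z) + a * E) + (1 - D * E) * a := by ring
      _ < D * ((∫ z in Ioi 0, W (b * z) * ρ z) + b * E) + (1 - D * E) * b :=
        add_lt_add_of_lt_of_le (mul_lt_mul_of_pos_left h hD)
          (mul_le_mul_of_nonneg_left hab.le (sub_nonneg.2 hDρ))
      _ = D * (∫ z in Ioi 0, W (b * z) * ρ z) + b := by ring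

section BlackScholes

variable {r q σ t : ℕ → ℝ} {m : ℕ}

theorem tauBS_pos (hσ : σ m ≠ 0) (ht : t (m - 1) < t m) : 0 < tauBS σ t m := by
  have := sub_pos.2 ht
  unfold tauBS
  positivity

theorem integral_id_mul_rho1BS (hσ : σ m ≠ 0) (hτ : 0 < tauBS σ t m) :
    ∫ z in Ioi 0, z * rho1BS r q σ t m z = exp (2 * (r m - q m) * tauBS σ t m / σ m ^ 2) := by
  rw [rho1BS_eq_lognormalPDFReal hτ, lognormalPDFReal.integral_id_mul (by simpa using hτ),
    coe_toNNReal _ (by positivity)]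
  congr 1
  field_simp
  ring

theorem exp_mul_integral_id_mul_rho1BS_le_one (hσ : σ m ≠ 0) (hτ : 0 < tauBS σ t m)
    (hq : 0 ≤ q m) :
    exp (-2 * r m * tauBS σ t m / σ m ^ 2) * ∫ z in Ioi 0, z * rho1BS r q σ t m z ≤ 1 := by
  rw [integral_id_mul_rho1BS hσ hτ, ← exp_add, exp_le_one_iff]
  have : 0 ≤ q m * tauBS σ t m / σ m ^ 2 := by positivity
  linarith [show -2 * r m * tauBS σ t m / σ m ^ 2 + 2 * (r m - q m) * tauBS σ t m / σ m ^ 2 =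
    -2 * (q m * tauBS σ t m / σ m ^ 2) by ring]

theorem IsPutShaped.isContinuationShaped_rho1BS {K : ℝ} {W c : ℝ → ℝ} (hW : IsPutShaped K W)
    (hK : 0 < K) (hσ : σ m ≠ 0) (hτ : 0 < tauBS σ t m) (hq : 0 ≤ q m)
    (hc : ∀ S, 0 < S → c S = exp (-2 * r m * tauBS σ t m / σ m ^ 2) *
      ∫ z in Ioi 0, W (S * z) * rho1BS r q σ t m z) : IsContinuationShaped c := by
  have hv : (2 * tauBS σ t m).toNNReal ≠ 0 := by simpa using hτ
  have hρ := rho1BS_eq_lognormalPDFReal (r := r) (q := q) hτ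
  refine hW.isContinuationShaped hK (fun z hz => ?_) ?_ ?_ (exp_pos _)
    (exp_mul_integral_id_mul_rho1BS_le_one hσ hτ hq) hc <;> rw [hρ]
  · exact lognormalPDFReal.pos hv hz
  · exact lognormalPDFReal.integrableOn
  · exact lognormalPDFReal.integrableOn_id_mul hv

end BlackScholes

theorem stmt6_general (M : ℕ) (K : ℝ) (hK : 0 < K) (t r q σ : ℕ → ℝ)
    (hq : ∀ m, 1 ≤ m → m ≤ M → 0 ≤ q m) (hσ : ∀ m, 0 < σ m)
    (ht : ∀ m, 1 ≤ m → m ≤ M → t (m - 1) < t m)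
    (V Vt : ℕ → ℝ → ℝ)
    (hVM : ∀ S : ℝ, V M S = max 0 (K - S))
    (hVt : ∀ m, 1 ≤ m → m ≤ M → ∀ S : ℝ, 0 < S →
      Vt (m - 1) S = Real.exp (-2 * r m * tauBS σ t m / (σ m)^2) *
        ∫ z in Set.Ioi (0:ℝ), V m (S * z) * rho1BS r q σ t m z)
    (hV : ∀ m, 1 ≤ m → m ≤ M → ∀ S : ℝ, 0 < S →
      V (m - 1) S = max (Vt (m - 1) S) (K - S)) :
    ∀ m, 1 ≤ m → m ≤ M - 1 → ∀ S1 S2 : ℝ, 0 < S1 → S1 < S2 →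
      0 < Vt m S1 - Vt m S2 ∧ Vt m S1 - Vt m S2 < S2 - S1 := by
  have hcont : ∀ k < M, IsPutShaped K (V (k + 1)) → IsContinuationShaped (Vt k) := by
    intro k hk hW
    exact hW.isContinuationShaped_rho1BS hK (hσ _).ne' (tauBS_pos (hσ _).ne' (ht _ (by omega) hk))
      (hq _ (by omega) hk) (by simpa using hVt (k + 1) (by omega) hk)
  have hshape : ∀ k ≤ M, IsPutShaped K (V k) := fun k hk =>
    Nat.decreasingInduction (fun k hk hW => (hcont k hk hW).isPutShaped_max hK
      (by simpa using hV (k + 1) (by omega) hk)) (funext hVM ▸ isPutShaped_payoff K) hk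
  intro m hm₁ hm S1 S2 hS1 hS12
  have hc := hcont m (by omega) (hshape (m + 1) (by omega))
  have hS2 : 0 < S2 := hS1.trans hS12
  exact ⟨sub_pos.2 (hc.strictAntiOn hS1 hS2 hS12),
    by linarith [hc.strictMonoOn_add hS1 hS2 hS12]⟩

/-- For the Bermudan put recursion with nonnegative yields `q_m ≥ 0`, the continuation
values satisfy `0 < Ṽ_m(S₁) - Ṽ_m(S₂) < S₂ - S₁` for all `0 < S₁ < S₂`
and every `1 ≤ m ≤ M-1`. -/
theorem stmt6 (M : ℕ) (hM : 2 ≤ M) (K : ℝ) (hK : 0 < K) (t r q σ : ℕ → ℝ)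
    (hq : ∀ m, 1 ≤ m → m ≤ M → 0 ≤ q m) (hσ : ∀ m, 0 < σ m)
    (ht : ∀ m, 1 ≤ m → m ≤ M → t (m - 1) < t m)
    (V Vt : ℕ → ℝ → ℝ)
    (hVM : ∀ S : ℝ, V M S = max 0 (K - S))
    (hVt : ∀ m, 1 ≤ m → m ≤ M → ∀ S : ℝ, 0 < S →
      Vt (m - 1) S = Real.exp (-2 * r m * tauBS σ t m / (σ m)^2) *
        ∫ z in Set.Ioi (0:ℝ), V m (S * z) * rho1BS r q σ t m z)
    (hV : ∀ m, 1 ≤ m → m ≤ M → ∀ S : ℝ, 0 < S →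
      V (m - 1) S = max (Vt (m - 1) S) (K - S)) :
    ∀ m, 1 ≤ m → m ≤ M - 1 → ∀ S1 S2 : ℝ, 0 < S1 → S1 < S2 →
      0 < Vt m S1 - Vt m S2 ∧ Vt m S1 - Vt m S2 < S2 - S1 :=
  stmt6_general M K hK t r q σ hq hσ ht V Vt hVM hVt hV
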